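/- For every integer n ≥ 1, the map f is scaling on the disk 1 + 2^{n+1} + 2^{n+2} + 2^{n+3}ℤ₂ with scaling ratio 2^{−n}: for all x, y in this disk, |f(x) − f(y)|₂ = 2^{−n}·|x − y|₂. Moreover, for every integer n ≥ 2, f(1 + 2^{n+1} + 2^{n+2} + 2^{n+3}ℤ₂) = 2^{2n} + 2^{2n+3}ℤ₂ as sets. -/

import Mathlib

open Function Set Polynomial

/-- The cubic polynomial `f(x) = (9/4)·x·(x−1)²` acting on `ℚ₂`. -/
noncomputable def f : ℚ_[2] → ℚ_[2] := fun x => (9 / 4 : ℚ_[2]) * x * (x - 1) ^ 2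

lemma norm2 : ‖(2:ℚ_[2])‖ = 1/2 := by
  have := @Padic.norm_p 2 _
  norm_num at this
  exact_mod_cast this

lemma norm2pow (k : ℕ) : ‖(2:ℚ_[2])^k‖ = (1/2:ℝ)^k := by
  rw [norm_pow, norm2]

lemma normodd (k : ℤ) (h : ¬ (2 ∣ k)) : ‖(k:ℚ_[2])‖ = 1 := by
  refine le_antisymm (Padic.norm_int_le_one k) ?_
  by_contra hlt
  push_neg at hlt
  exact h (by exact_mod_cast (Padic.norm_intCast_lt_one_iff (k := k)).mp hlt)

lemma norm3 : ‖(3:ℚ_[2])‖ = 1 := by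
  have := normodd 3 (by decide); exact_mod_cast this

lemma norm9 : ‖(9:ℚ_[2])‖ = 1 := by
  have := normodd 9 (by decide); exact_mod_cast this

lemma norm5 : ‖(5:ℚ_[2])‖ = 1 := by
  have := normodd 5 (by decide); exact_mod_cast this

lemma norm27 : ‖(27:ℚ_[2])‖ = 1 := by
  have := normodd 27 (by decide); exact_mod_cast this

lemma half_pow (m : ℕ) : (1/2:ℝ)^m = ((2:ℕ):ℝ)^(-(m:ℤ)) := by
  rw [zpow_neg, ← zpow_natCast]
  norm_num
  rw [← inv_pow]
  norm_num

lemma lt_step (q : ℚ_[2]) (k : ℕ) (h : ‖q‖ < (1/2:ℝ)^k) : ‖q‖ ≤ (1/2:ℝ)^(k+1) := by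
  rw [half_pow] at h ⊢
  rw [Padic.norm_le_pow_iff_norm_lt_pow_add_one]
  convert h using 2
  push_cast; ring

lemma norm_add_of_lt (a r : ℚ_[2]) (h : ‖r‖ < ‖a‖) : ‖a + r‖ = ‖a‖ := by
  rw [Padic.add_eq_max_of_ne h.ne']
  exact max_eq_left h.le

lemma half_pow_le {a b : ℕ} (h : a ≤ b) : (1/2:ℝ)^b ≤ (1/2:ℝ)^a :=
  pow_le_pow_of_le_one (by norm_num) (by norm_num) h

lemma half_pow_lt {a b : ℕ} (h : a < b) : (1/2:ℝ)^b < (1/2:ℝ)^a :=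
  pow_lt_pow_right_of_lt_one₀ (by norm_num) (by norm_num) h

lemma half_le_one (k : ℕ) : (1/2:ℝ)^k ≤ 1 :=
  pow_le_one₀ (by norm_num) (by norm_num)

lemma tri (q r : ℚ_[2]) (c : ℝ) (hq : ‖q‖ ≤ c) (hr : ‖r‖ ≤ c) : ‖q + r‖ ≤ c :=
  le_trans (Padic.nonarchimedean q r) (max_le hq hr)

lemma norm_tt (n : ℕ) : ‖(2:ℚ_[2])^n * (2:ℚ_[2])^n‖ = (1/2:ℝ)^(n+n) := by
  rw [norm_mul, norm2pow, ← pow_add]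

lemma coe_num (k : ℕ) : ((k : ℤ_[2]) : ℚ_[2]) = (k:ℚ_[2]) := PadicInt.coe_natCast k
lemma coe2 : ((2:ℤ_[2]):ℚ_[2]) = 2 := by exact_mod_cast coe_num 2
lemma coe3 : ((3:ℤ_[2]):ℚ_[2]) = 3 := by exact_mod_cast coe_num 3
lemma coe4 : ((4:ℤ_[2]):ℚ_[2]) = 4 := by exact_mod_cast coe_num 4
lemma coe6 : ((6:ℤ_[2]):ℚ_[2]) = 6 := by exact_mod_cast coe_num 6

lemma scaling (n : ℕ) (hn : 1 ≤ n) (x y : ℚ_[2])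
    (hx : ‖x - (1 + 2 ^ (n + 1) + 2 ^ (n + 2))‖ ≤ (1 / 2 : ℝ) ^ (n + 3))
    (hy : ‖y - (1 + 2 ^ (n + 1) + 2 ^ (n + 2))‖ ≤ (1 / 2 : ℝ) ^ (n + 3)) :
    ‖f x - f y‖ = (1 / 2 : ℝ) ^ n * ‖x - y‖ := by
  set t : ℚ_[2] := 2^n with htdef
  have ht : ‖t‖ = (1/2:ℝ)^n := norm2pow n
  have hc : (1:ℚ_[2]) + 2^(n+1) + 2^(n+2) = 1 + 6*t := by
    rw [pow_succ, pow_succ, pow_succ]; ring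
  rw [hc] at hx hy
  set r : ℚ_[2] := (x - (1+6*t)) + (y - (1+6*t)) + ((x-1)^2 + (x-1)*(y-1) + (y-1)^2) with hrdef
  have key : f x - f y = (9/4:ℚ_[2]) * (x - y) * (12*t + r) := by
    simp only [f, hrdef]; ring
  have h6 : ‖(6:ℚ_[2])*t‖ = (1/2:ℝ)^(n+1) := by
    have : (6:ℚ_[2])*t = 2*(3*t) := by ring
    rw [this, norm_mul, norm_mul, norm2, norm3, ht, pow_succ]; ring
  have hx1 : ‖x - 1‖ ≤ (1/2:ℝ)^(n+1) := by
    have hxx : x - 1 = (x - (1+6*t)) + 6*t := by ring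
    rw [hxx]
    exact tri _ _ _ (le_trans hx (half_pow_le (by omega))) (le_of_eq h6)
  have hy1 : ‖y - 1‖ ≤ (1/2:ℝ)^(n+1) := by
    have hyy : y - 1 = (y - (1+6*t)) + 6*t := by ring
    rw [hyy]
    exact tri _ _ _ (le_trans hy (half_pow_le (by omega))) (le_of_eq h6)
  have hq : ∀ a b : ℚ_[2], ‖a‖ ≤ (1/2:ℝ)^(n+1) → ‖b‖ ≤ (1/2:ℝ)^(n+1) →
      ‖a*b‖ ≤ (1/2:ℝ)^(n+3) := by
    intro a b ha hb
    rw [norm_mul]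
    calc ‖a‖*‖b‖ ≤ (1/2:ℝ)^(n+1) * (1/2:ℝ)^(n+1) :=
          mul_le_mul ha hb (norm_nonneg _) (by positivity)
      _ = (1/2:ℝ)^(n+1+(n+1)) := by rw [← pow_add]
      _ ≤ (1/2:ℝ)^(n+3) := half_pow_le (by omega)
  have hr : ‖r‖ ≤ (1/2:ℝ)^(n+3) := by
    refine tri _ _ _ (tri _ _ _ hx hy) (tri _ _ _ (tri _ _ _ ?_ ?_) ?_)
    · rw [sq (x-1)]; exact hq _ _ hx1 hx1
    · exact hq _ _ hx1 hy1
    · rw [sq (y-1)]; exact hq _ _ hy1 hy1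
  have h12 : ‖(12:ℚ_[2])*t‖ = (1/2:ℝ)^(n+2) := by
    have : (12:ℚ_[2])*t = 2*(2*(3*t)) := by ring
    rw [this, norm_mul, norm_mul, norm_mul, norm2, norm3, ht]
    rw [pow_succ, pow_succ]; ring
  have hw : ‖(12:ℚ_[2])*t + r‖ = (1/2:ℝ)^(n+2) := by
    rw [norm_add_of_lt]
    · exact h12
    · rw [h12]; exact lt_of_le_of_lt hr (half_pow_lt (by omega))
  have h94 : ‖(9/4:ℚ_[2])‖ = 4 := by
    have h4 : (4:ℚ_[2]) = 2^2 := by norm_num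
    rw [norm_div, norm9, h4, norm2pow]; norm_num
  rw [key, norm_mul, norm_mul, h94, hw, pow_add]
  ring

lemma surj (n : ℕ) (hn : 2 ≤ n) (b : ℚ_[2])
    (hb : ‖b - 2 ^ (2*n)‖ ≤ (1 / 2 : ℝ) ^ (2*n + 3)) :
    ∃ x : ℚ_[2], ‖x - (1 + 2 ^ (n + 1) + 2 ^ (n + 2))‖ ≤ (1 / 2 : ℝ) ^ (n + 3) ∧ f x = b := by
  set t : ℚ_[2] := 2^n with htdef
  have ht : ‖t‖ = (1/2:ℝ)^n := norm2pow n
  have h2n : (2:ℚ_[2])^(2*n) = t*t := by rw [two_mul, pow_add]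
  rw [h2n] at hb
  set e : ℚ_[2] := b - t*t with hedef
  have hbnorm : ‖b‖ ≤ 1 := by
    have hbe : b = t*t + e := by ring
    rw [hbe]
    refine tri _ _ _ ?_ ?_
    · rw [norm_tt]; exact half_le_one _
    · exact hb.trans (half_le_one _)
  have h49 : ‖(4/9:ℚ_[2])‖ = 1/4 := by
    have h4 : (4:ℚ_[2]) = 2^2 := by norm_num
    rw [norm_div, norm9, h4, norm2pow]; norm_num
  have hcmem : ‖(4/9:ℚ_[2]) * b‖ ≤ 1 := by
    rw [norm_mul, h49]; nlinarith [norm_nonneg b]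
  set c : ℤ_[2] := ⟨(4/9:ℚ_[2]) * b, hcmem⟩ with hcdef
  have hccoe : ((c : ℤ_[2]) : ℚ_[2]) = (4/9:ℚ_[2]) * b := rfl
  set a : ℤ_[2] := 1 + 6*2^n with hadef
  have hacoe : ((a : ℤ_[2]) : ℚ_[2]) = 1 + 6*t := by
    rw [hadef, htdef]; push_cast [coe6, coe2]; ring
  set G : Polynomial ℤ_[2] := X^3 - C 2 * X^2 + X - C c with hGdef
  have hGeval : ∀ z : ℤ_[2], G.eval z = z^3 - 2*z^2 + z - c := by intro z; simp [hGdef]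
  have hGder : ∀ z : ℤ_[2], G.derivative.eval z = 3*z^2 - 4*z + 1 := by
    intro z; simp [hGdef, derivative_pow]; ring
  have h9t : ‖(1:ℚ_[2]) + 9*t‖ = 1 := by
    have := norm_add_of_lt 1 (9*t) (by
      rw [norm_mul, norm9, norm_one, one_mul, ht]
      calc (1/2:ℝ)^n ≤ (1/2:ℝ)^1 := half_pow_le (by omega)
        _ < 1 := by norm_num)
    simpa using this
  have h12t : ‖(12:ℚ_[2])*t‖ = (1/2:ℝ)^(n+2) := by
    have : (12:ℚ_[2])*t = 2*(2*(3*t)) := by ring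
    rw [this, norm_mul, norm_mul, norm_mul, norm2, norm3, ht, pow_succ, pow_succ]; ring
  have hder : ‖G.derivative.eval a‖ = (1/2:ℝ)^(n+2) := by
    rw [PadicInt.norm_def, hGder]
    have hcast : (((3*a^2 - 4*a + 1 : ℤ_[2])) : ℚ_[2]) = (12*t) * (1 + 9*t) := by
      push_cast [hacoe, coe3, coe4]; ring
    rw [hcast, norm_mul, h9t, h12t, mul_one]
  have hval : ‖G.eval a‖ ≤ (1/2:ℝ)^(2*n+5) := by
    rw [PadicInt.norm_def, hGeval]
    have hcast : (((a^3 - 2*a^2 + a - c : ℤ_[2])) : ℚ_[2])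
        = (320/9)*(t*t) + 216*(t*(t*t)) + (-((4/9)*e)) := by
      push_cast [hacoe, hccoe, coe2]
      rw [hedef]; ring
    rw [hcast]
    refine tri _ _ _ (tri _ _ _ ?_ ?_) ?_
    · have hA : ‖(320/9:ℚ_[2])*(t*t)‖ = (1/2:ℝ)^(6+(n+n)) := by
        rw [norm_mul, norm_div, show (320:ℚ_[2]) = 2^6*5 by norm_num, norm_mul,
          norm2pow, norm5, norm9, norm_tt, pow_add]
        ring
      rw [hA]; exact half_pow_le (by omega)
    · have hB : ‖(216:ℚ_[2])*(t*(t*t))‖ = (1/2:ℝ)^(3+(n+(n+n))) := by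
        rw [norm_mul, show (216:ℚ_[2]) = 2^3*27 by norm_num, norm_mul,
          norm2pow, norm27, norm_mul, ht, norm_tt, pow_add, pow_add]
        ring
      rw [hB]; exact half_pow_le (by omega)
    · rw [norm_neg, norm_mul, h49]
      calc (1/4:ℝ) * ‖e‖ ≤ (1/4:ℝ) * (1/2:ℝ)^(2*n+3) := by nlinarith [hb, norm_nonneg e]
        _ = (1/2:ℝ)^(2*n+5) := by
            rw [show 2*n+5 = (2*n+3)+2 by omega, pow_add]; ring
  have hnorm : ‖G.eval a‖ < ‖G.derivative.eval a‖^2 := by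
    rw [hder, ← pow_mul]
    calc ‖G.eval a‖ ≤ (1/2:ℝ)^(2*n+5) := hval
      _ < (1/2:ℝ)^((n+2)*2) := half_pow_lt (by omega)
  obtain ⟨z, hz0, hz1, -, -⟩ := hensels_lemma hnorm
  refine ⟨(z : ℚ_[2]), ?_, ?_⟩
  · have hcast : ((z - a : ℤ_[2]) : ℚ_[2]) = (z:ℚ_[2]) - (1 + 2^(n+1) + 2^(n+2)) := by
      push_cast [hacoe]
      rw [htdef, pow_succ, pow_succ, pow_succ]; ring
    have hlt : ‖(z:ℚ_[2]) - (1 + 2^(n+1) + 2^(n+2))‖ < (1/2:ℝ)^(n+2) := by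
      rw [← hcast, ← PadicInt.norm_def]
      rw [Polynomial.coe_aeval_eq_eval, hder] at hz1; exact hz1
    exact lt_step _ _ hlt
  · rw [Polynomial.coe_aeval_eq_eval, hGeval] at hz0
    have hco : ((z^3 - 2*z^2 + z - c : ℤ_[2]) : ℚ_[2]) = 0 := by rw [hz0]; norm_cast
    have hq : (z:ℚ_[2])^3 - 2*(z:ℚ_[2])^2 + (z:ℚ_[2]) - (4/9)*b = 0 := by
      push_cast [hccoe, coe2] at hco
      exact hco
    show (9/4:ℚ_[2]) * z * ((z:ℚ_[2]) - 1)^2 = b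
    linear_combination (9/4 : ℚ_[2]) * hq

/-- For every `n ≥ 1`, `f` is scaling on `1 + 2^{n+1} + 2^{n+2} + 2^{n+3}ℤ₂` with scaling ratio
`2^{−n}`; moreover for every `n ≥ 2`,
`f(1 + 2^{n+1} + 2^{n+2} + 2^{n+3}ℤ₂) = 2^{2n} + 2^{2n+3}ℤ₂` as sets. -/
theorem stmt13 (n : ℕ) :
    (1 ≤ n → ∀ x y : ℚ_[2],
        ‖x - (1 + 2 ^ (n + 1) + 2 ^ (n + 2))‖ ≤ (1 / 2 : ℝ) ^ (n + 3) →
        ‖y - (1 + 2 ^ (n + 1) + 2 ^ (n + 2))‖ ≤ (1 / 2 : ℝ) ^ (n + 3) →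
        ‖f x - f y‖ = (1 / 2 : ℝ) ^ n * ‖x - y‖) ∧
    (2 ≤ n →
      f '' {x : ℚ_[2] | ‖x - (1 + 2 ^ (n + 1) + 2 ^ (n + 2))‖ ≤ (1 / 2 : ℝ) ^ (n + 3)} =
        {x : ℚ_[2] | ‖x - 2 ^ (2 * n)‖ ≤ (1 / 2 : ℝ) ^ (2 * n + 3)}) := by
  constructor
  · exact fun hn x y hx hy => scaling n hn x y hx hy
  · intro hn
    ext b
    simp only [mem_image, mem_setOf_eq]
    constructor
    · rintro ⟨x, hx, rfl⟩
      set t : ℚ_[2] := 2^n with htdef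
      have ht : ‖t‖ = (1/2:ℝ)^n := norm2pow n
      have h2n : (2:ℚ_[2])^(2*n) = t*t := by rw [two_mul, pow_add]
      set A : ℚ_[2] := 1 + 2^(n+1) + 2^(n+2) with hAdef
      have hAself : ‖A - A‖ ≤ (1/2:ℝ)^(n+3) := by
        simp
      have hsc : ‖f x - f A‖ = (1/2:ℝ)^n * ‖x - A‖ :=
        scaling n (by omega) x A hx hAself
      have h1 : ‖f x - f A‖ ≤ (1/2:ℝ)^(2*n+3) := by
        rw [hsc]
        calc (1/2:ℝ)^n * ‖x - A‖ ≤ (1/2:ℝ)^n * (1/2:ℝ)^(n+3) := by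
              have := norm_nonneg (x - A)
              nlinarith [hx, pow_pos (show (0:ℝ) < 1/2 by norm_num) n]
          _ = (1/2:ℝ)^(n+(n+3)) := by rw [← pow_add]
          _ = (1/2:ℝ)^(2*n+3) := by ring_nf
      have h2 : ‖f A - 2^(2*n)‖ ≤ (1/2:ℝ)^(2*n+3) := by
        have hfa : f A - 2^(2*n) = 80*(t*t) + 486*(t*(t*t)) := by
          simp only [f, hAdef, h2n, htdef, pow_succ]
          ring
        rw [hfa]
        refine tri _ _ _ ?_ ?_
        · have : ‖(80:ℚ_[2])*(t*t)‖ = (1/2:ℝ)^(4+(n+n)) := by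
            rw [norm_mul, show (80:ℚ_[2]) = 2^4*5 by norm_num, norm_mul,
              norm2pow, norm5, norm_tt, pow_add]
            ring
          rw [this]; exact half_pow_le (by omega)
        · have h243 : ‖(243:ℚ_[2])‖ = 1 := by
            have := normodd 243 (by decide); exact_mod_cast this
          have : ‖(486:ℚ_[2])*(t*(t*t))‖ = (1/2:ℝ)^(1+(n+(n+n))) := by
            rw [norm_mul, show (486:ℚ_[2]) = 2^1*243 by norm_num, norm_mul,
              norm2pow, h243, norm_mul, ht, norm_tt, pow_add, pow_add]
            ring
          rw [this]; exact half_pow_le (by omega)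
      have : f x - 2^(2*n) = (f x - f A) + (f A - 2^(2*n)) := by ring
      rw [this]
      exact tri _ _ _ h1 h2
    · intro hbmem
      obtain ⟨x, hx, hfx⟩ := surj n hn b hbmem
      exact ⟨x, hx, hfx⟩
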